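/- arXiv:1602.07409 — 2 statements merged into one kernel-verified Lean document; each statement's English description precedes it below -/
import Mathlib

section
/- Let k be a field, M a linearly ordered type of monomials, T a set of monic polynomials in M →₀ k with associated one-step reduction relation →, and V a k-subspace of M →₀ k. Write ~_V for the equivalence closure of → restricted to V. Then for all f, g ∈ V: f − g lies in the k-linear span of T ∩ V if and only if f ~_V g. -/
open Finsupp Relation

variable {k M : Type*}

/-- The leading monomial of a nonzero polynomial `f : M →₀ k`: the maximum of its support. -/
noncomputable def leadMon [Zero k] [LinearOrder M] (f : M →₀ k) (hf : f ≠ 0) : M :=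
  f.support.max' (Finsupp.support_nonempty_iff.mpr hf)

/-- A polynomial is monic if it is nonzero and its leading coefficient equals 1. -/
def IsMonic [Field k] [LinearOrder M] (f : M →₀ k) : Prop :=
  ∃ hf : f ≠ 0, f (leadMon f hf) = 1

/-- The one-step reduction relation associated with a set `T` of (monic) polynomials:
`f → g` iff there is `h ∈ T` with `f (lead h) ≠ 0` and `g = f - f (lead h) • h`. -/
def StepRel [Field k] [LinearOrder M] (T : Set (M →₀ k)) (f g : M →₀ k) : Prop :=
  ∃ h ∈ T, ∃ hh : h ≠ 0, f (leadMon h hh) ≠ 0 ∧ g = f - f (leadMon h hh) • h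

/-- The one-step reduction relation restricted to a subspace `V`: both endpoints lie in `V`. -/
def StepRelOn [Field k] [LinearOrder M] (T : Set (M →₀ k)) (V : Submodule k (M →₀ k))
    (f g : M →₀ k) : Prop :=
  f ∈ V ∧ g ∈ V ∧ StepRel T f g

lemma eqvGen_sub_smul [Field k] [LinearOrder M] {T : Set (M →₀ k)}
    (hT : ∀ f ∈ T, IsMonic f) {V : Submodule k (M →₀ k)} {h : M →₀ k}
    (hhT : h ∈ T) (hhV : h ∈ V) (c : k) {f : M →₀ k} (hf : f ∈ V) :
    Relation.EqvGen (StepRelOn T V) f (f - c • h) := by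
  obtain ⟨hh, hmon⟩ := hT h hhT
  set m := leadMon h hh with hm
  by_cases hc : c = 0
  · simp only [hc, zero_smul, sub_zero]
    exact Relation.EqvGen.refl f
  by_cases ha : f m = 0
  · refine Relation.EqvGen.symm _ _ (Relation.EqvGen.rel _ _ ?_)
    refine ⟨V.sub_mem hf (V.smul_mem c hhV), hf, h, hhT, hh, ?_, ?_⟩
    · simp [← hm, ha, hmon, hc]
    · have hv : (f - c • h) m = -c := by simp [← hm, ha, hmon]
      rw [← hm, hv, neg_smul, sub_neg_eq_add, sub_add_cancel]
  · have step1 : StepRelOn T V f (f - f m • h) :=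
      ⟨hf, V.sub_mem hf (V.smul_mem _ hhV), h, hhT, hh, ha, rfl⟩
    by_cases hac : f m = c
    · rw [← hac]; exact Relation.EqvGen.rel _ _ step1
    · have hval : (f - c • h) m = f m - c := by simp [← hm, hmon]
      have step2 : StepRelOn T V (f - c • h) (f - f m • h) := by
        refine ⟨V.sub_mem hf (V.smul_mem c hhV), V.sub_mem hf (V.smul_mem _ hhV),
          h, hhT, hh, ?_, ?_⟩
        · rw [← hm, hval]; exact sub_ne_zero.mpr hac
        · rw [← hm, hval, sub_smul]; abel
      exact Relation.EqvGen.trans _ _ _ (Relation.EqvGen.rel _ _ step1)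
        (Relation.EqvGen.symm _ _ (Relation.EqvGen.rel _ _ step2))

/-- For `f, g` in a subspace `V`: `f - g` lies in the span of `T ∩ V` iff `f ~_V g`,
where `~_V` is the equivalence closure of the reduction relation restricted to `V`. -/
theorem sub_mem_span_iff_eqvGen_stepRelOn [Field k] [LinearOrder M]
    (T : Set (M →₀ k)) (hT : ∀ f ∈ T, IsMonic f) (V : Submodule k (M →₀ k))
    (f g : M →₀ k) (hf : f ∈ V) (hg : g ∈ V) :
    f - g ∈ Submodule.span k (T ∩ (V : Set (M →₀ k))) ↔
      Relation.EqvGen (StepRelOn T V) f g := by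
  have hspanV : Submodule.span k (T ∩ (V : Set (M →₀ k))) ≤ V :=
    Submodule.span_le.mpr Set.inter_subset_right
  constructor
  · intro hmem
    have key : ∀ s ∈ Submodule.span k (T ∩ (V : Set (M →₀ k))),
        ∀ c : k, ∀ f' : M →₀ k, f' ∈ V →
          Relation.EqvGen (StepRelOn T V) f' (f' - c • s) := by
      intro s hs
      induction hs using Submodule.span_induction with
      | mem x hx => exact fun c f' hf' => eqvGen_sub_smul hT hx.1 hx.2 c hf'
      | zero => intro c f' hf'; simpa using Relation.EqvGen.refl f'
      | add x y hx hy ihx ihy =>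
          intro c f' hf'
          have h1 := ihx c f' hf'
          have h2 := ihy c (f' - c • x) (V.sub_mem hf' (V.smul_mem c (hspanV hx)))
          have : f' - c • x - c • y = f' - c • (x + y) := by rw [smul_add]; abel
          rw [this] at h2
          exact Relation.EqvGen.trans _ _ _ h1 h2
      | smul a x hx ihx =>
          intro c f' hf'
          have := ihx (c * a) f' hf'
          rwa [mul_smul] at this
    have := key (f - g) hmem 1 f hf
    simpa using this
  · intro hequiv
    clear hf hg
    induction hequiv with
    | rel x y hxy =>
        obtain ⟨hxV, hyV, h, hhT, hh, hne, rfl⟩ := hxy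
        have hhV : h ∈ V := by
          have : h = (x (leadMon h hh))⁻¹ • (x - (x - x (leadMon h hh) • h)) := by
            rw [sub_sub_cancel, smul_smul, inv_mul_cancel₀ hne, one_smul]
          rw [this]
          exact V.smul_mem _ (V.sub_mem hxV hyV)
        have : x - (x - x (leadMon h hh) • h) = x (leadMon h hh) • h := by abel
        rw [this]
        exact Submodule.smul_mem _ _ (Submodule.subset_span ⟨hhT, hhV⟩)
    | refl x => simp
    | symm x y _ ih => rw [show y - x = -(x - y) by abel]; exact Submodule.neg_mem _ ih
    | trans x y z _ _ ih1 ih2 =>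
        rw [show x - z = (x - y) + (y - z) by abel]
        exact Submodule.add_mem _ ih1 ih2
end

section
/- Let k be a field and M a linearly ordered type of monomials whose strict order is well-founded. Let T be a set of monic polynomials in M →₀ k with associated one-step reduction relation →. Suppose that for every monomial m ∈ M and every pair of one-step reductions single(m,1) → g₁ and single(m,1) → g₂, the difference g₁ − g₂ lies in the k-linear span of the set of those h ∈ T with lead(h) < m. Call a monomial m ∈ M reduced if m ≠ lead(h) for every h ∈ T. Then the images of the polynomials single(m,1), for m ranging over the reduced monomials, under the quotient map M →₀ k → (M →₀ k)/span(T), form a linear basis of the quotient space (M →₀ k)/span(T). -/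
open Finsupp Relation

variable {k M : Type*}

/-!
Well-founded recursion on the monomials defines a normal form: a reduced monomial is its own
normal form, and any other monomial `m` is replaced by `single m 1 - h` for one fixed `h ∈ T`
with leading monomial `m`, whose support lies below `m`. Modulo `span T` every polynomial is
congruent to its normal form. Conversely the normal form kills `T`: for `h ∈ T` with leading
monomial `m`, the diamond condition makes `h` and the fixed reducer of `m` differ by an element
of the span of the part of `T` below `m`, which the normal form kills by induction. Hence the
normal form descends to an isomorphism from the quotient onto the free module on the reduced
monomials.
-/

section Reduction

variable [Field k] [LinearOrder M]

def IsReducedMonomial (T : Set (M →₀ k)) (m : M) : Prop :=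
  ∀ h ∈ T, ∀ hh : h ≠ 0, m ≠ leadMon h hh

theorem lt_leadMon_of_mem_support_single_sub {h : M →₀ k} (hh : h ≠ 0)
    (hmonic : h (leadMon h hh) = 1) {m : M} (hm : m ∈ (single (leadMon h hh) 1 - h).support) :
    m < leadMon h hh := by
  rw [Finsupp.mem_support_iff] at hm
  rcases eq_or_ne m (leadMon h hh) with rfl | hne
  · simp [hmonic] at hm
  · have hmh : m ∈ h.support := by
      rw [Finsupp.mem_support_iff]
      simpa [Finsupp.single_eq_of_ne' hne.symm] using hm
    exact lt_of_le_of_ne (h.support.le_max' m hmh) hne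

theorem stepRel_single_leadMon {T : Set (M →₀ k)} {h : M →₀ k} (hT : h ∈ T)
    (hh : h ≠ 0) :
    StepRel T (single (leadMon h hh) 1) (single (leadMon h hh) 1 - h) :=
  ⟨h, hT, hh, by simp, by simp⟩

def ReductionDiamond (T : Set (M →₀ k)) : Prop :=
  ∀ m : M, ∀ g₁ g₂ : M →₀ k,
    StepRel T (single m 1) g₁ → StepRel T (single m 1) g₂ →
    g₁ - g₂ ∈ Submodule.span k {h | h ∈ T ∧ ∃ hh : h ≠ 0, leadMon h hh < m}

theorem exists_leadMon_eq_of_not_isReducedMonomial {T : Set (M →₀ k)} {m : M}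
    (hm : ¬IsReducedMonomial T m) :
    ∃ h ∈ T, ∃ hh : h ≠ 0, leadMon h hh = m := by
  simpa [IsReducedMonomial, eq_comm] using hm

noncomputable def reducer (T : Set (M →₀ k)) (m : M) (hm : ¬IsReducedMonomial T m) :
    M →₀ k :=
  (exists_leadMon_eq_of_not_isReducedMonomial hm).choose

variable {T : Set (M →₀ k)} {m : M}

theorem reducer_mem (hm : ¬IsReducedMonomial T m) : reducer T m hm ∈ T :=
  (exists_leadMon_eq_of_not_isReducedMonomial hm).choose_spec.1

theorem reducer_ne_zero (hm : ¬IsReducedMonomial T m) : reducer T m hm ≠ 0 :=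
  (exists_leadMon_eq_of_not_isReducedMonomial hm).choose_spec.2.choose

theorem leadMon_reducer (hm : ¬IsReducedMonomial T m) :
    leadMon (reducer T m hm) (reducer_ne_zero hm) = m :=
  (exists_leadMon_eq_of_not_isReducedMonomial hm).choose_spec.2.choose_spec

theorem lt_of_mem_support_single_sub_reducer (hT : ∀ f ∈ T, IsMonic f)
    (hm : ¬IsReducedMonomial T m) {x : M} (hx : x ∈ (single m 1 - reducer T m hm).support) :
    x < m := by
  obtain ⟨_, hmonic⟩ := hT _ (reducer_mem hm)
  have hlt := lt_leadMon_of_mem_support_single_sub (reducer_ne_zero hm) hmonic (m := x)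
  rw [leadMon_reducer hm] at hlt
  exact hlt hx

end Reduction

section NormalForm

variable [Field k] [LinearOrder M] [WellFoundedLT M] (T : Set (M →₀ k))
  (hT : ∀ f ∈ T, IsMonic f)

open Classical in
noncomputable def monomialNormalForm : M → ({m : M // IsReducedMonomial T m} →₀ k) :=
  wellFounded_lt.fix fun m ih =>
    if hm : IsReducedMonomial T m then single ⟨m, hm⟩ 1
    else ∑ x ∈ (single m (1 : k) - reducer T m hm).support.attach,
      (single m (1 : k) - reducer T m hm) x.1 •
        ih x.1 (lt_of_mem_support_single_sub_reducer hT hm x.2)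

noncomputable def normalForm : (M →₀ k) →ₗ[k] ({m : M // IsReducedMonomial T m} →₀ k) :=
  linearCombination k (monomialNormalForm T hT)

variable {T} {m : M}

theorem normalForm_single (c : k) :
    normalForm T hT (single m c) = c • monomialNormalForm T hT m :=
  linearCombination_single k c m

theorem monomialNormalForm_of_isReducedMonomial (hm : IsReducedMonomial T m) :
    monomialNormalForm T hT m = single ⟨m, hm⟩ 1 := by
  rw [monomialNormalForm, WellFounded.fix_eq, dif_pos hm]

theorem monomialNormalForm_of_not_isReducedMonomial (hm : ¬IsReducedMonomial T m) :
    monomialNormalForm T hT m = normalForm T hT (single m 1 - reducer T m hm) := by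
  rw [monomialNormalForm, WellFounded.fix_eq, dif_neg hm, normalForm, linearCombination_apply,
    Finsupp.sum]
  exact Finset.sum_attach _ fun x =>
    (single m (1 : k) - reducer T m hm) x • monomialNormalForm T hT x

theorem normalForm_reducer (hm : ¬IsReducedMonomial T m) :
    normalForm T hT (reducer T m hm) = 0 := by
  have h := monomialNormalForm_of_not_isReducedMonomial hT hm
  rwa [← one_smul k (monomialNormalForm T hT m), ← normalForm_single, map_sub,
    eq_sub_iff_add_eq, add_eq_left] at h

theorem normalForm_lmapDomain (c : {m : M // IsReducedMonomial T m} →₀ k) :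
    normalForm T hT (lmapDomain k k Subtype.val c) = c := by
  induction c using Finsupp.induction_linear with
  | zero => simp
  | add c d hc hd => rw [map_add, map_add, hc, hd]
  | single r c =>
    rw [lmapDomain_apply, mapDomain_single, normalForm_single,
      monomialNormalForm_of_isReducedMonomial hT r.2, smul_single_one]

theorem normalForm_eq_zero_of_mem (hamb : ReductionDiamond T) {h : M →₀ k} (hh : h ∈ T) :
    normalForm T hT h = 0 := by
  obtain ⟨h0, -⟩ := hT h hh
  suffices ∀ m, ∀ g ∈ T, ∀ g0 : g ≠ 0, leadMon g g0 = m → normalForm T hT g = 0 from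
    this _ h hh h0 rfl
  intro m
  induction m using WellFoundedLT.induction with
  | _ m ih =>
    rintro h hh h0 rfl
    have hm : ¬IsReducedMonomial T (leadMon h h0) := fun hr => hr h hh h0 rfl
    have hlower : Submodule.span k {g | g ∈ T ∧ ∃ g0 : g ≠ 0, leadMon g g0 < leadMon h h0}
        ≤ LinearMap.ker (normalForm T hT) := by
      rw [Submodule.span_le]
      rintro g ⟨hg, g0, hlt⟩
      exact ih _ hlt g hg g0 rfl
    have hstep₀ := stepRel_single_leadMon (reducer_mem hm) (reducer_ne_zero hm)
    rw [leadMon_reducer hm] at hstep₀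
    have hdiff := hlower (hamb _ _ _ (stepRel_single_leadMon hh h0) hstep₀)
    rwa [sub_sub_sub_cancel_left, LinearMap.mem_ker, map_sub, normalForm_reducer, zero_sub,
      neg_eq_zero] at hdiff

theorem span_le_ker_normalForm (hamb : ReductionDiamond T) :
    Submodule.span k T ≤ LinearMap.ker (normalForm T hT) :=
  Submodule.span_le.mpr fun _ hh => normalForm_eq_zero_of_mem hT hamb hh

theorem mkQ_lmapDomain_normalForm :
    (Submodule.span k T).mkQ ∘ₗ lmapDomain k k Subtype.val ∘ₗ normalForm T hT =
      (Submodule.span k T).mkQ := by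
  set ψ := (Submodule.span k T).mkQ ∘ₗ lmapDomain k k Subtype.val ∘ₗ normalForm T hT -
    (Submodule.span k T).mkQ
  suffices hψ : ∀ m, ψ (single m 1) = 0 by
    refine sub_eq_zero.mp (Finsupp.lhom_ext fun m c => ?_)
    rw [← smul_single_one, map_smul, hψ, smul_zero, LinearMap.zero_apply]
  intro m
  induction m using WellFoundedLT.induction with
  | _ m ih =>
    by_cases hm : IsReducedMonomial T m
    · simp [ψ, normalForm_single, monomialNormalForm_of_isReducedMonomial hT hm]
    have hreducer : ψ (reducer T m hm) = 0 := by
      simp [ψ, normalForm_reducer, (Submodule.Quotient.mk_eq_zero _).mpr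
        (Submodule.subset_span (reducer_mem hm))]
    have htail : single m 1 - reducer T m hm ∈ LinearMap.ker ψ := by
      have hsupp : single m 1 - reducer T m hm ∈ supported k k (Set.Iio m) :=
        (mem_supported k _).mpr fun x hx => lt_of_mem_support_single_sub_reducer hT hm hx
      refine (supported_eq_span_single k (Set.Iio m) ▸ Submodule.span_le.mpr ?_) hsupp
      rintro _ ⟨x, hx, rfl⟩
      exact ih x hx
    rw [← sub_add_cancel (single m 1) (reducer T m hm), map_add, LinearMap.mem_ker.mp htail,
      hreducer, add_zero]

noncomputable def quotientSpanEquivReduced (hamb : ReductionDiamond T) :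
    ((M →₀ k) ⧸ Submodule.span k T) ≃ₗ[k] ({m : M // IsReducedMonomial T m} →₀ k) :=
  LinearEquiv.ofLinearMap ((Submodule.span k T).liftQ _ (span_le_ker_normalForm hT hamb))
    ((Submodule.span k T).mkQ ∘ₗ lmapDomain k k Subtype.val)
    (LinearMap.ext fun c => normalForm_lmapDomain hT c)
    (Submodule.linearMap_qext _ (by
      rw [LinearMap.comp_assoc, Submodule.liftQ_mkQ, LinearMap.comp_assoc,
        mkQ_lmapDomain_normalForm, LinearMap.id_comp]))

theorem quotientSpanEquivReduced_symm_single (hamb : ReductionDiamond T)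
    (r : {m : M // IsReducedMonomial T m}) :
    (quotientSpanEquivReduced hT hamb).symm (single r 1) =
      Submodule.Quotient.mk (single r.1 1) := by
  simp [quotientSpanEquivReduced]

end NormalForm

/-- Under the local confluence condition on monomials, the images of the
polynomials `single m 1`, for `m` ranging over the reduced monomials (those that
are not the leading monomial of any element of `T`), form a linear basis of the
quotient space `(M →₀ k) ⧸ span T`. -/
theorem reduced_monomials_basis_of_quotient [Field k] [LinearOrder M]
    (hwf : WellFounded ((· < ·) : M → M → Prop))
    (T : Set (M →₀ k)) (hT : ∀ f ∈ T, IsMonic f)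
    (hamb : ∀ m : M, ∀ g₁ g₂ : M →₀ k,
      StepRel T (Finsupp.single m 1) g₁ → StepRel T (Finsupp.single m 1) g₂ →
      g₁ - g₂ ∈ Submodule.span k {h : M →₀ k | h ∈ T ∧ ∃ hh : h ≠ 0, leadMon h hh < m}) :
    ∃ b : Module.Basis {m : M // ∀ h ∈ T, ∀ hh : h ≠ 0, m ≠ leadMon h hh} k
        ((M →₀ k) ⧸ Submodule.span k T),
      ∀ m : {m : M // ∀ h ∈ T, ∀ hh : h ≠ 0, m ≠ leadMon h hh},
        b m = Submodule.Quotient.mk (Finsupp.single (m : M) (1 : k)) := by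
  have : WellFoundedLT M := ⟨hwf⟩
  exact ⟨Module.Basis.ofRepr (quotientSpanEquivReduced hT hamb), fun m =>
    (congrFun (Module.Basis.coe_ofRepr _) m).trans
      (quotientSpanEquivReduced_symm_single hT hamb m)⟩
end
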